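/- Let ψ be a rank-one projector, ρ a density matrix, and suppose Λ₊, Λ₋ are quantum channels and λ₊, λ₋ ≥ 0 with λ₊ − λ₋ = 1 satisfy tr[ψ·(λ₊Λ₊(ρ) − λ₋Λ₋(ρ))] ≥ 1 − ε. If moreover tr[ψ Λ₊(ρ)] ≤ f and tr[ψ Λ₋(ρ)] ≥ 0 for some f ∈ (0,1], then λ₊ + λ₋ ≥ max{ 2(1−ε)/f − 1, 1 }. -/

import Mathlib

open Matrix BigOperators ComplexOrder

noncomputable section

/-- Trace norm: tr √(AᴴA). -/
noncomputable def traceNorm {n : Type*} [Fintype n] [DecidableEq n] (A : Matrix n n ℂ) : ℝ :=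
  (((Matrix.posSemidef_conjTranspose_mul_self A).1.eigenvectorUnitary : Matrix n n ℂ) *
    Matrix.diagonal (((↑) : ℝ → ℂ) ∘ (Real.sqrt ·) ∘ (Matrix.posSemidef_conjTranspose_mul_self A).1.eigenvalues) *
    (star ((Matrix.posSemidef_conjTranspose_mul_self A).1.eigenvectorUnitary : Matrix n n ℂ))).trace.re

/-- Density operator: positive semidefinite with unit trace. -/
def IsDensity {n : Type*} [Fintype n] [DecidableEq n] (ρ : Matrix n n ℂ) : Prop :=
  ρ.PosSemidef ∧ ρ.trace = 1

/-- Choi matrix of a linear map on matrices. -/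
noncomputable def choi {n m : Type*} [Fintype n] [DecidableEq n] [Fintype m] [DecidableEq m]
    (Φ : Matrix n n ℂ →ₗ[ℂ] Matrix m m ℂ) : Matrix (n × m) (n × m) ℂ :=
  ∑ i : n, ∑ j : n,
    Matrix.kroneckerMap (· * ·) (Matrix.single i j (1 : ℂ)) (Φ (Matrix.single i j (1 : ℂ)))

/-- Quantum channel: completely positive (PSD Choi matrix) and trace preserving. -/
def IsCPTP {n m : Type*} [Fintype n] [DecidableEq n] [Fintype m] [DecidableEq m]
    (Φ : Matrix n n ℂ →ₗ[ℂ] Matrix m m ℂ) : Prop :=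
  (choi Φ).PosSemidef ∧ ∀ A, (Φ A).trace = A.trace

/-! Dropping the non-negative `λ₋` term and bounding the `Λ₊` overlap by `f` turns the fidelity
condition into `1 - ε ≤ λ₊ f`; as `λ₊ + λ₋ = 2 λ₊ - 1`, this gives `λ₊ + λ₋ ≥ 2 (1 - ε) / f - 1`,
while `λ₊ + λ₋ ≥ 1` is just `λ₋ ≥ 0`. -/

theorem Matrix.re_trace_mul_ofReal_smul_sub {m : Type*} [Fintype m] (ψ A B : Matrix m m ℂ)
    (a b : ℝ) :
    (ψ * ((a : ℂ) • A - (b : ℂ) • B)).trace.re = a * (ψ * A).trace.re - b * (ψ * B).trace.re := by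
  simp only [Matrix.mul_sub, Matrix.mul_smul, trace_sub, trace_smul, Complex.sub_re,
    smul_eq_mul, Complex.re_ofReal_mul]

theorem max_two_mul_div_sub_one_le_add {lp lm c f : ℝ} (hlm : 0 ≤ lm) (hl : lp - lm = 1)
    (hf : 0 < f) (hc : c ≤ lp * f) :
    max (2 * c / f - 1) 1 ≤ lp + lm := by
  have hlp : c / f ≤ lp := (div_le_iff₀ hf).2 hc
  refine max_le ?_ (by linarith)
  rw [mul_div_assoc]
  linarith

theorem virtual_overhead_lower_bound_general
    {n m : Type*} [Fintype m]
    (ψ : Matrix m m ℂ)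
    (ρ : Matrix n n ℂ)
    (Λp Λm : Matrix n n ℂ →ₗ[ℂ] Matrix m m ℂ)
    (lp lm : ℝ) (hlp : 0 ≤ lp) (hlm : 0 ≤ lm) (hl : lp - lm = 1)
    (ε f : ℝ) (hf0 : 0 < f)
    (hfid : 1 - ε ≤ ((ψ * ((lp : ℂ) • Λp ρ - (lm : ℂ) • Λm ρ)).trace).re)
    (hup : ((ψ * Λp ρ).trace).re ≤ f)
    (hlo : 0 ≤ ((ψ * Λm ρ).trace).re) :
    max (2 * (1 - ε) / f - 1) 1 ≤ lp + lm := by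
  rw [Matrix.re_trace_mul_ofReal_smul_sub] at hfid
  have hfid_le : 1 - ε ≤ lp * f := by
    linarith [mul_le_mul_of_nonneg_left hup hlp, mul_nonneg hlm hlo]
  exact max_two_mul_div_sub_one_le_add hlm hl hf0 hfid_le

theorem virtual_overhead_lower_bound
    {n m : Type*} [Fintype n] [DecidableEq n] [Fintype m] [DecidableEq m]
    (v : m → ℂ) (hv : star v ⬝ᵥ v = 1)
    (ψ : Matrix m m ℂ) (hψ : ψ = Matrix.vecMulVec v (star v))
    (ρ : Matrix n n ℂ) (hρ : IsDensity ρ)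
    (Λp Λm : Matrix n n ℂ →ₗ[ℂ] Matrix m m ℂ) (hΛp : IsCPTP Λp) (hΛm : IsCPTP Λm)
    (lp lm : ℝ) (hlp : 0 ≤ lp) (hlm : 0 ≤ lm) (hl : lp - lm = 1)
    (ε f : ℝ) (hε : 0 ≤ ε) (hε1 : ε < 1) (hf0 : 0 < f) (hf1 : f ≤ 1)
    (hfid : 1 - ε ≤ ((ψ * ((lp : ℂ) • Λp ρ - (lm : ℂ) • Λm ρ)).trace).re)
    (hup : ((ψ * Λp ρ).trace).re ≤ f)
    (hlo : 0 ≤ ((ψ * Λm ρ).trace).re) :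
    max (2 * (1 - ε) / f - 1) 1 ≤ lp + lm :=
  virtual_overhead_lower_bound_general ψ ρ Λp Λm lp lm hlp hlm hl ε f hf0 hfid hup hlo
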